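/- arXiv:0711.4161 — 2 statements merged into one kernel-verified Lean document; each statement's English description precedes it below -/
import Mathlib

section
/- Define θ_3(v|τ) := ∑_{k=-∞}^∞ q^{k²} e^{2kπiv} with q = e^{πiτ}, Im τ > 0. Then for q ∈ (0,1) real (i.e., τ = it with t > 0) and v real, θ_3 satisfies the Jacobi triple product identity θ_3(v|τ) = (q²;q²)_∞ · (-q e^{2πiv}; q²)_∞ · (-q e^{-2πiv}; q²)_∞. -/
/-!
Gauss's `q`-binomial theorem `∏_{k<n} (1 + z Q^k) = ∑_j [n choose j]_Q Q^(j choose 2) z^j`, taken at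
`Q = q²`, `n = 2N`, `z = x q^(1-2N)`, gives Cauchy's finite form of the triple product
`∏_{j<N} (1 + x q^(2j+1)) (1 + x⁻¹ q^(2j+1)) = ∑_{|m| ≤ N} [2N choose N+m]_{q²} q^(m²) x^m`.
As `N → ∞` every coefficient `[2N choose N+m]_{q²}` tends to `1 / (q²; q²)_∞`, and all of them are
bounded by `1 / (q²; q²)_∞²`, so Tannery's theorem passes to the limit in the sum.
-/

open Real Complex

/-- The infinite q-Pochhammer symbol `(z; p)_∞`. -/
noncomputable def qPochInf (z p : ℂ) : ℂ := ∏' k : ℕ, (1 - z * p ^ k)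

open Finset Filter Topology

section QBinomial

variable {R : Type*} [CommRing R]

def qFactorial (Q : R) (n : ℕ) : R := ∏ k ∈ range n, (1 - Q ^ (k + 1))

def qBinomial (Q : R) : ℕ → ℕ → R
  | _, 0 => 1
  | 0, _ + 1 => 0
  | n + 1, j + 1 => qBinomial Q n j + Q ^ (j + 1) * qBinomial Q n (j + 1)

@[simp]
lemma qBinomial_zero_right (Q : R) (n : ℕ) : qBinomial Q n 0 = 1 := by
  cases n <;> rfl

lemma qBinomial_succ_succ (Q : R) (n j : ℕ) :
    qBinomial Q (n + 1) (j + 1) = qBinomial Q n j + Q ^ (j + 1) * qBinomial Q n (j + 1) :=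
  rfl

lemma qBinomial_eq_zero_of_lt (Q : R) : ∀ {n j : ℕ}, n < j → qBinomial Q n j = 0
  | 0, _ + 1, _ => rfl
  | n + 1, j + 1, h => by
    rw [qBinomial_succ_succ, qBinomial_eq_zero_of_lt Q (by omega),
      qBinomial_eq_zero_of_lt Q (by omega), mul_zero, add_zero]

@[simp]
lemma qBinomial_self (Q : R) : ∀ n : ℕ, qBinomial Q n n = 1
  | 0 => rfl
  | n + 1 => by
    rw [qBinomial_succ_succ, qBinomial_self Q n, qBinomial_eq_zero_of_lt Q n.lt_succ_self,
      mul_zero, add_zero]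

lemma map_qBinomial {S : Type*} [CommRing S] (f : R →+* S) (Q : R) :
    ∀ n j : ℕ, f (qBinomial Q n j) = qBinomial (f Q) n j
  | _, 0 => by simp
  | 0, _ + 1 => map_zero f
  | n + 1, j + 1 => by
    simp only [qBinomial_succ_succ, map_add, map_mul, map_pow, map_qBinomial f Q n]

lemma qFactorial_succ (Q : R) (n : ℕ) : qFactorial Q (n + 1) = qFactorial Q n * (1 - Q ^ (n + 1)) :=
  prod_range_succ _ _

lemma qFactorial_mul_qFactorial_mul_qBinomial (Q : R) :
    ∀ j k : ℕ, qFactorial Q j * qFactorial Q k * qBinomial Q (j + k) j = qFactorial Q (j + k)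
  | 0, k => by simp [qFactorial]
  | j + 1, 0 => by simp [qFactorial]
  | j + 1, k + 1 => by
    have hleft := qFactorial_mul_qFactorial_mul_qBinomial Q j (k + 1)
    have hright := qFactorial_mul_qFactorial_mul_qBinomial Q (j + 1) k
    rw [show j + 1 + (k + 1) = j + (k + 1) + 1 by omega, qBinomial_succ_succ,
      qFactorial_succ Q (j + (k + 1))]
    rw [show j + 1 + k = j + (k + 1) by omega] at hright
    rw [← hleft, qFactorial_succ Q j, qFactorial_succ Q k] at *
    linear_combination (1 - Q ^ (k + 1)) * Q ^ (j + 1) * hright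

theorem prod_one_add_mul_pow_eq_sum_qBinomial (Q : R) (n : ℕ) (z : R) :
    ∏ k ∈ range n, (1 + z * Q ^ k) =
      ∑ j ∈ range (n + 1), qBinomial Q n j * Q ^ j.choose 2 * z ^ j := by
  induction n generalizing z with
  | zero => simp
  | succ n ih =>
    set b : ℕ → R := fun j => qBinomial Q n j * Q ^ j.choose 2 * (z * Q) ^ j
    have hlast : b (n + 1) = 0 := by simp [b, qBinomial_eq_zero_of_lt Q n.lt_succ_self]
    have hterm : ∀ j, qBinomial Q (n + 1) (j + 1) * Q ^ (j + 1).choose 2 * z ^ (j + 1) =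
        b j * z + b (j + 1) := by
      intro j
      simp only [b, qBinomial_succ_succ, Nat.choose_succ_succ, Nat.choose_one_right]
      ring
    calc ∏ k ∈ range (n + 1), (1 + z * Q ^ k)
        = (∏ k ∈ range n, (1 + z * Q * Q ^ k)) * (1 + z) := by
          simp [prod_range_succ', pow_succ', mul_assoc]
      _ = (∑ j ∈ range (n + 1), b j) * z + (∑ j ∈ range (n + 1), b (j + 1) + b 0) := by
          rw [ih, ← sum_range_succ' b (n + 1), sum_range_succ b (n + 1), hlast]
          ring
      _ = _ := by
          rw [sum_range_succ' _ (n + 1), sum_mul, ← add_assoc, ← sum_add_distrib]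
          simp [hterm, b]

end QBinomial

lemma two_mul_choose_two (j : ℕ) : (2 * j.choose 2 : ℤ) = j * (j - 1) := by
  induction j with
  | zero => simp
  | succ j ih =>
    rw [Nat.choose_succ_succ, Nat.choose_one_right]
    push_cast
    linear_combination ih

section FiniteTripleProduct

variable {K : Type*} [Field K] {q x : K}

lemma prod_range_zpow_neg_odd (hq : q ≠ 0) (n : ℕ) :
    ∏ j ∈ range n, q ^ (-(2 * j + 1) : ℤ) = q ^ (-(n : ℤ) ^ 2) := by
  induction n with
  | zero => simp
  | succ n ih =>
    rw [prod_range_succ, ih, ← zpow_add₀ hq]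
    push_cast
    ring_nf

lemma prod_range_two_mul_one_add_mul_pow (hq : q ≠ 0) (hx : x ≠ 0) (N : ℕ) :
    ∏ k ∈ range (2 * N), (1 + x * q ^ (1 - 2 * N : ℤ) * (q ^ 2) ^ k) =
      x ^ N * q ^ (-(N : ℤ) ^ 2) *
        ∏ j ∈ range N, (1 + x * q ^ (2 * j + 1)) * (1 + x⁻¹ * q ^ (2 * j + 1)) := by
  have hshift (n : ℕ) :
      x * q ^ (1 - 2 * N : ℤ) * (q ^ 2) ^ n = x * q ^ (2 * n + 1 - 2 * N : ℤ) := by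
    rw [mul_assoc, ← pow_mul, ← zpow_natCast, ← zpow_add₀ hq]
    push_cast
    ring_nf
  have hupper (j : ℕ) :
      1 + x * q ^ (1 - 2 * N : ℤ) * (q ^ 2) ^ (N + j) = 1 + x * q ^ (2 * j + 1) := by
    rw [hshift, ← zpow_natCast]
    push_cast
    ring_nf
  have hlower (j : ℕ) (hj : j ∈ range N) :
      1 + x * q ^ (1 - 2 * N : ℤ) * (q ^ 2) ^ (N - 1 - j) =
        x * q ^ (-(2 * j + 1) : ℤ) * (1 + x⁻¹ * q ^ (2 * j + 1)) := by
    have hcast : (((N - 1 - j : ℕ) : ℤ)) = N - 1 - j := by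
      have := mem_range.1 hj
      omega
    have hcancel : x * q ^ (-(2 * j + 1) : ℤ) * (x⁻¹ * q ^ (2 * j + 1)) = 1 := by
      rw [mul_mul_mul_comm, mul_inv_cancel₀ hx, ← zpow_natCast, ← zpow_add₀ hq]
      push_cast
      simp
    rw [hshift, mul_add, mul_one, hcancel, add_comm, hcast]
    ring_nf
  rw [two_mul, prod_range_add, ← prod_range_reflect, prod_congr rfl hlower,
    prod_congr rfl fun j _ => hupper j, prod_mul_distrib, prod_mul_distrib, prod_mul_distrib,
    prod_const, card_range, prod_range_zpow_neg_odd hq]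
  ring

lemma sum_range_two_mul_qBinomial_mul_pow (hq : q ≠ 0) (hx : x ≠ 0) (N : ℕ) :
    ∑ j ∈ range (2 * N + 1),
        qBinomial (q ^ 2) (2 * N) j * (q ^ 2) ^ j.choose 2 * (x * q ^ (1 - 2 * N : ℤ)) ^ j =
      x ^ N * q ^ (-(N : ℤ) ^ 2) *
        ∑ m ∈ Icc (-N : ℤ) N, qBinomial (q ^ 2) (2 * N) (N + m).toNat * q ^ (m ^ 2) * x ^ m := by
  rw [mul_sum]
  refine sum_nbij' (fun j => (j : ℤ) - N) (fun m => (N + m).toNat) ?_ ?_ ?_ ?_ ?_ <;>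
    simp only [mem_range, mem_Icc] <;> intro j hj
  · omega
  · omega
  · omega
  · omega
  rw [show ((N : ℤ) + (j - N)).toNat = j by omega]
  have hx' : x ^ (j : ℤ) = x ^ (N : ℤ) * x ^ ((j : ℤ) - N) := by
    rw [← zpow_add₀ hx]
    ring_nf
  have hq' : q ^ (2 * j.choose 2 : ℤ) * q ^ ((1 - 2 * N) * j : ℤ) =
      q ^ (-(N : ℤ) ^ 2) * q ^ (((j : ℤ) - N) ^ 2) := by
    rw [← zpow_add₀ hq, ← zpow_add₀ hq, two_mul_choose_two]
    ring_nf
  have hpow : (q ^ 2) ^ j.choose 2 * (x * q ^ (1 - 2 * N : ℤ)) ^ j =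
      x ^ N * q ^ (-(N : ℤ) ^ 2) * (q ^ (((j : ℤ) - N) ^ 2) * x ^ ((j : ℤ) - N)) := by
    rw [mul_pow, ← pow_mul, ← zpow_natCast, ← zpow_natCast (q ^ _), ← zpow_mul,
      ← zpow_natCast x, ← zpow_natCast x, hx']
    push_cast
    linear_combination x ^ (N : ℤ) * x ^ ((j : ℤ) - N) * hq'
  linear_combination qBinomial (q ^ 2) (2 * N) j * hpow

theorem jacobi_triple_product_finite (hq : q ≠ 0) (hx : x ≠ 0) (N : ℕ) :
    ∏ j ∈ range N, (1 + x * q ^ (2 * j + 1)) * (1 + x⁻¹ * q ^ (2 * j + 1)) =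
      ∑ m ∈ Icc (-N : ℤ) N, qBinomial (q ^ 2) (2 * N) (N + m).toNat * q ^ (m ^ 2) * x ^ m := by
  refine mul_left_cancel₀ (mul_ne_zero (pow_ne_zero N hx) (zpow_ne_zero (-(N : ℤ) ^ 2) hq)) ?_
  rw [← prod_range_two_mul_one_add_mul_pow hq hx, ← sum_range_two_mul_qBinomial_mul_pow hq hx,
    prod_one_add_mul_pow_eq_sum_qBinomial]

end FiniteTripleProduct

section RealQFactorial

variable {Q : ℝ}

lemma one_sub_pow_succ_pos (hQ0 : 0 ≤ Q) (hQ1 : Q < 1) (k : ℕ) : 0 < 1 - Q ^ (k + 1) :=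
  sub_pos.2 (pow_lt_one₀ hQ0 hQ1 k.succ_ne_zero)

lemma qFactorial_pos (hQ0 : 0 ≤ Q) (hQ1 : Q < 1) (n : ℕ) : 0 < qFactorial Q n :=
  prod_pos fun k _ => one_sub_pow_succ_pos hQ0 hQ1 k

lemma qFactorial_antitone (hQ0 : 0 ≤ Q) (hQ1 : Q < 1) : Antitone (qFactorial Q) :=
  antitone_nat_of_succ_le fun n => by
    rw [qFactorial_succ]
    exact mul_le_of_le_one_right (qFactorial_pos hQ0 hQ1 n).le
      (sub_le_self _ (pow_nonneg hQ0 _))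

lemma hasProd_one_sub_pow_succ (hQ0 : 0 ≤ Q) (hQ1 : Q < 1) :
    HasProd (fun k : ℕ => 1 - Q ^ (k + 1)) (∏' k : ℕ, (1 - Q ^ (k + 1))) := by
  have hsum : Summable fun k : ℕ => -Q ^ (k + 1) :=
    ((summable_geometric_of_lt_one hQ0 hQ1).mul_left Q).neg.congr fun k => by ring
  simpa only [sub_eq_add_neg] using (Real.multipliable_one_add_of_summable hsum).hasProd

lemma tendsto_qFactorial (hQ0 : 0 ≤ Q) (hQ1 : Q < 1) :
    Tendsto (qFactorial Q) atTop (𝓝 (∏' k : ℕ, (1 - Q ^ (k + 1)))) :=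
  (hasProd_one_sub_pow_succ hQ0 hQ1).tendsto_prod_nat

lemma tprod_one_sub_pow_succ_pos (hQ0 : 0 ≤ Q) (hQ1 : Q < 1) :
    0 < ∏' k : ℕ, (1 - Q ^ (k + 1)) := by
  refine (tprod_nonneg fun k => (one_sub_pow_succ_pos hQ0 hQ1 k).le).lt_of_ne' ?_
  simp only [sub_eq_add_neg]
  refine tprod_one_add_ne_zero_of_summable (fun k => ?_) ?_
  · rw [← sub_eq_add_neg]
    exact (one_sub_pow_succ_pos hQ0 hQ1 k).ne'
  · simpa [abs_of_nonneg hQ0, pow_succ] using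
      (summable_geometric_of_lt_one hQ0 hQ1).mul_right Q

lemma qBinomial_nonneg (hQ0 : 0 ≤ Q) : ∀ n j : ℕ, 0 ≤ qBinomial Q n j
  | _, 0 => by simp
  | 0, _ + 1 => le_rfl
  | n + 1, j + 1 => by
    rw [qBinomial_succ_succ]
    have := qBinomial_nonneg hQ0 n j
    have := qBinomial_nonneg hQ0 n (j + 1)
    positivity

lemma qBinomial_add_eq_div (hQ0 : 0 ≤ Q) (hQ1 : Q < 1) (j k : ℕ) :
    qBinomial Q (j + k) j = qFactorial Q (j + k) / (qFactorial Q j * qFactorial Q k) := by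
  rw [eq_div_iff (mul_pos (qFactorial_pos hQ0 hQ1 j) (qFactorial_pos hQ0 hQ1 k)).ne', mul_comm,
    qFactorial_mul_qFactorial_mul_qBinomial]

lemma qBinomial_le (hQ0 : 0 ≤ Q) (hQ1 : Q < 1) (n j : ℕ) :
    qBinomial Q n j ≤ ((∏' k : ℕ, (1 - Q ^ (k + 1))) ^ 2)⁻¹ := by
  have hC := tprod_one_sub_pow_succ_pos hQ0 hQ1
  have hlow := (qFactorial_antitone hQ0 hQ1).le_of_tendsto (tendsto_qFactorial hQ0 hQ1)
  rcases le_or_gt j n with hjn | hnj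
  · obtain ⟨k, rfl⟩ := Nat.exists_eq_add_of_le hjn
    have hnum : qFactorial Q (j + k) ≤ 1 := by
      simpa [qFactorial] using qFactorial_antitone hQ0 hQ1 (Nat.zero_le (j + k))
    have hden : _ ≤ qFactorial Q j * qFactorial Q k :=
      mul_le_mul (hlow j) (hlow k) hC.le (qFactorial_pos hQ0 hQ1 j).le
    rw [qBinomial_add_eq_div hQ0 hQ1, inv_eq_one_div, sq]
    exact div_le_div₀ zero_le_one hnum (by positivity) hden
  · rw [qBinomial_eq_zero_of_lt Q hnj]
    positivity

lemma tendsto_qBinomial_add (hQ0 : 0 ≤ Q) (hQ1 : Q < 1) {ι : Type*} {l : Filter ι}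
    {a b : ι → ℕ} (ha : Tendsto a l atTop) (hb : Tendsto b l atTop) :
    Tendsto (fun i => qBinomial Q (a i + b i) (a i)) l (𝓝 (∏' k : ℕ, (1 - Q ^ (k + 1)))⁻¹) := by
  have hC := tprod_one_sub_pow_succ_pos hQ0 hQ1
  have hlim := tendsto_qFactorial hQ0 hQ1
  have hab : Tendsto (fun i => a i + b i) l atTop :=
    tendsto_atTop_mono (fun i => Nat.le_add_right _ _) ha
  convert (hlim.comp hab).div ((hlim.comp ha).mul (hlim.comp hb)) (by positivity) using 1
  · funext i
    exact qBinomial_add_eq_div hQ0 hQ1 _ _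
  · field_simp

lemma tendsto_qBinomial_two_mul (hQ0 : 0 ≤ Q) (hQ1 : Q < 1) (m : ℤ) :
    Tendsto (fun N : ℕ => qBinomial Q (2 * N) (N + m).toNat) atTop
      (𝓝 (∏' k : ℕ, (1 - Q ^ (k + 1)))⁻¹) := by
  have hidx (s : ℤ) : Tendsto (fun N : ℕ => (N + s).toNat) atTop atTop :=
    tendsto_atTop_atTop.2 fun b => ⟨b + s.natAbs, fun N hN => by omega⟩
  refine (tendsto_qBinomial_add hQ0 hQ1 (hidx m) (hidx (-m))).congr' ?_
  filter_upwards [eventually_ge_atTop m.natAbs] with N hN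
  rw [show (N + m).toNat + (N + -m).toNat = 2 * N by omega]

end RealQFactorial

lemma hasProd_qPochInf (z : ℂ) {p : ℂ} (hp : ‖p‖ < 1) :
    HasProd (fun k : ℕ => 1 - z * p ^ k) (qPochInf z p) := by
  have hsum : Summable fun k : ℕ => -(z * p ^ k) :=
    (summable_geometric_of_norm_lt_one hp).mul_left z |>.neg
  simpa only [qPochInf, sub_eq_add_neg] using
    (Complex.multipliable_one_add_of_summable hsum).hasProd

lemma qPochInf_ofReal_self {Q : ℝ} (hQ0 : 0 ≤ Q) (hQ1 : Q < 1) :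
    qPochInf (Q : ℂ) Q = ((∏' k : ℕ, (1 - Q ^ (k + 1)) : ℝ) : ℂ) := by
  refine (((hasProd_one_sub_pow_succ hQ0 hQ1).map Complex.ofRealHom
    Complex.continuous_ofReal).congr_fun fun k => ?_).tprod_eq
  simp [pow_succ']

lemma summable_pow_sq_mul_pow {q : ℝ} (hq0 : 0 ≤ q) (hq1 : q < 1) (r : ℝ) :
    Summable fun n : ℕ => q ^ (n ^ 2) * r ^ n := by
  have hsmall : ∀ᶠ n : ℕ in atTop, q ^ n * |r| ≤ 2⁻¹ :=
    ((tendsto_pow_atTop_nhds_zero_of_lt_one hq0 hq1).mul_const |r|).eventually_le_const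
      (by simp)
  refine (summable_geometric_two).of_norm_bounded_eventually_nat ?_
  filter_upwards [hsmall] with n hn
  rw [norm_mul, norm_pow, norm_pow, Real.norm_of_nonneg hq0, Real.norm_eq_abs, sq, pow_mul,
    ← mul_pow, one_div]
  exact pow_le_pow_left₀ (by positivity) hn n

lemma summable_zpow_sq_mul_zpow {q : ℝ} (hq0 : 0 ≤ q) (hq1 : q < 1) (r : ℝ) :
    Summable fun m : ℤ => q ^ (m ^ 2) * r ^ m := by
  refine .of_nat_of_neg ?_ ?_
  · simpa [← zpow_natCast] using summable_pow_sq_mul_pow hq0 hq1 r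
  · simpa [← zpow_natCast, inv_pow] using summable_pow_sq_mul_pow hq0 hq1 r⁻¹

lemma tendsto_sum_Icc_qBinomial {q : ℝ} (hq0 : 0 ≤ q) (hq1 : q < 1) (x : ℂ) :
    Tendsto (fun N : ℕ => ∑ m ∈ Icc (-N : ℤ) N,
        qBinomial ((q : ℂ) ^ 2) (2 * N) (N + m).toNat * (q : ℂ) ^ (m ^ 2) * x ^ m) atTop
      (𝓝 (((∏' k : ℕ, (1 - (q ^ 2) ^ (k + 1)) : ℝ) : ℂ)⁻¹ *
        ∑' m : ℤ, (q : ℂ) ^ (m ^ 2) * x ^ m)) := by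
  have hQ0 : 0 ≤ q ^ 2 := sq_nonneg q
  have hQ1 : q ^ 2 < 1 := by nlinarith
  set C : ℝ := ∏' k : ℕ, (1 - (q ^ 2) ^ (k + 1))
  have hcoef (n j : ℕ) : qBinomial ((q : ℂ) ^ 2) n j = ((qBinomial (q ^ 2) n j : ℝ) : ℂ) := by
    rw [← Complex.ofReal_pow]
    exact (map_qBinomial Complex.ofRealHom (q ^ 2) n j).symm
  set F : ℕ → ℤ → ℂ := fun N => (Set.Icc (-N : ℤ) N).indicator fun m =>
    qBinomial ((q : ℂ) ^ 2) (2 * N) (N + m).toNat * (q : ℂ) ^ (m ^ 2) * x ^ m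
  have hF (N : ℕ) : ∑' m, F N m = ∑ m ∈ Icc (-N : ℤ) N,
      qBinomial ((q : ℂ) ^ 2) (2 * N) (N + m).toNat * (q : ℂ) ^ (m ^ 2) * x ^ m := by
    rw [tsum_eq_sum (s := Icc (-N : ℤ) N) fun m hm => by simp_all [F]]
    exact sum_congr rfl fun m hm => by simp_all [F]
  have hlim (m : ℤ) : Tendsto (F · m) atTop (𝓝 ((C : ℂ)⁻¹ * ((q : ℂ) ^ (m ^ 2) * x ^ m))) := by
    have hcoef_lim := ((Complex.continuous_ofReal.tendsto _).comp
      (tendsto_qBinomial_two_mul hQ0 hQ1 m)).mul_const ((q : ℂ) ^ (m ^ 2) * x ^ m)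
    rw [Complex.ofReal_inv] at hcoef_lim
    refine hcoef_lim.congr' ?_
    filter_upwards [eventually_ge_atTop m.natAbs] with N hN
    have hm : m ∈ Set.Icc (-N : ℤ) N := ⟨by omega, by omega⟩
    simp [F, hm, hcoef, mul_assoc]
  have hbound (N : ℕ) (m : ℤ) : ‖F N m‖ ≤ (C ^ 2)⁻¹ * (q ^ (m ^ 2) * ‖x‖ ^ m) := by
    have hterm : 0 ≤ q ^ (m ^ 2) * ‖x‖ ^ m := by positivity
    by_cases hm : m ∈ Set.Icc (-N : ℤ) N
    · simp only [F, Set.indicator_of_mem hm]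
      rw [hcoef]
      simp only [norm_mul, norm_zpow, Complex.norm_real,
        Real.norm_of_nonneg hq0, Real.norm_of_nonneg (qBinomial_nonneg hQ0 _ _), mul_assoc]
      exact mul_le_mul_of_nonneg_right (qBinomial_le hQ0 hQ1 _ _) hterm
    · simp only [F, Set.indicator_of_notMem hm, norm_zero]
      positivity
  have hsum := ((summable_zpow_sq_mul_zpow hq0 hq1 ‖x‖).mul_left (C ^ 2)⁻¹)
  simpa only [hF, tsum_mul_left] using
    tendsto_tsum_of_dominated_convergence hsum hlim (Eventually.of_forall hbound)

theorem jacobi_triple_product {q : ℝ} (hq0 : 0 < q) (hq1 : q < 1) {x : ℂ} (hx : x ≠ 0) :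
    ∑' m : ℤ, (q : ℂ) ^ (m ^ 2) * x ^ m =
      qPochInf ((q : ℂ) ^ 2) ((q : ℂ) ^ 2) * qPochInf (-q * x) ((q : ℂ) ^ 2) *
        qPochInf (-q * x⁻¹) ((q : ℂ) ^ 2) := by
  have hq2 : ‖(q : ℂ) ^ 2‖ < 1 := by
    rw [norm_pow, Complex.norm_real, Real.norm_of_nonneg hq0.le]
    nlinarith
  have hC := tprod_one_sub_pow_succ_pos (sq_nonneg q) (by nlinarith : q ^ 2 < 1)
  have hP : qPochInf ((q : ℂ) ^ 2) ((q : ℂ) ^ 2) =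
      ((∏' k : ℕ, (1 - (q ^ 2) ^ (k + 1)) : ℝ) : ℂ) := by
    rw [← qPochInf_ofReal_self (sq_nonneg q) (by nlinarith)]
    push_cast
    rfl
  have hprod := ((hasProd_qPochInf (-q * x) hq2).tendsto_prod_nat.mul
    (hasProd_qPochInf (-q * x⁻¹) hq2).tendsto_prod_nat)
  simp_rw [← prod_mul_distrib] at hprod
  have hlim := tendsto_nhds_unique
    ((tendsto_sum_Icc_qBinomial hq0.le hq1 x).congr fun N =>
      (jacobi_triple_product_finite (by exact_mod_cast hq0.ne') hx N).symm)
    (hprod.congr fun N => prod_congr rfl fun j _ => by ring)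
  rw [hP, mul_assoc, ← hlim, mul_inv_cancel_left₀ (by exact_mod_cast hC.ne')]

theorem theta3_triple_product (t : ℝ) (ht : 0 < t) (v : ℝ) (q : ℝ)
    (hq : q = Real.exp (-π * t)) :
    (∑' k : ℤ, (q : ℂ) ^ (k ^ 2) * Complex.exp (2 * k * π * Complex.I * v)) =
      qPochInf ((q : ℂ) ^ 2) ((q : ℂ) ^ 2) *
        qPochInf (-(q : ℂ) * Complex.exp (2 * π * Complex.I * v)) ((q : ℂ) ^ 2) *
        qPochInf (-(q : ℂ) * Complex.exp (-(2 * π * Complex.I * v))) ((q : ℂ) ^ 2) := by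
  have hq0 : 0 < q := hq ▸ Real.exp_pos _
  have hq1 : q < 1 := hq ▸ Real.exp_lt_one_iff.2 (by nlinarith [Real.pi_pos])
  have hterm (k : ℤ) : Complex.exp (2 * k * π * Complex.I * v) =
      Complex.exp (2 * π * Complex.I * v) ^ k := by
    rw [← Complex.exp_int_mul]
    ring_nf
  simp_rw [hterm, Complex.exp_neg]
  exact jacobi_triple_product hq0 hq1 (Complex.exp_ne_zero _)
end

section
/- For τ in the upper half-plane and v ∈ ℂ, the theta functions θ_2(v|τ) := ∑_{k∈ℤ} e^{πiτ(k+1/2)²} e^{(2k+1)πiv} and θ_4(v|τ) := ∑_{k∈ℤ} (-1)^k e^{πiτk²} e^{2kπiv} satisfy θ_2(v/τ | -1/τ) = √(τ/i) e^{πiv²/τ} θ_4(v|τ). -/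
open Real Complex

/-- Jacobi theta function θ₂(v|τ). -/
noncomputable def theta2 (v τ : ℂ) : ℂ :=
  ∑' k : ℤ, Complex.exp (π * Complex.I * τ * ((k : ℂ) + 1 / 2) ^ 2 +
    (2 * (k : ℂ) + 1) * π * Complex.I * v)

/-- Jacobi theta function θ₄(v|τ). -/
noncomputable def theta4 (v τ : ℂ) : ℂ :=
  ∑' k : ℤ, (-1 : ℂ) ^ k *
    Complex.exp (π * Complex.I * τ * (k : ℂ) ^ 2 + 2 * π * Complex.I * k * v)

lemma theta2_eq (v τ : ℂ) :
    theta2 v τ = Complex.exp (π * Complex.I * τ / 4 + π * Complex.I * v) *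
      jacobiTheta₂ (v + τ / 2) τ := by
  rw [theta2, jacobiTheta₂, ← tsum_mul_left]
  refine tsum_congr fun k => ?_
  rw [jacobiTheta₂_term, ← Complex.exp_add]
  congr 1
  ring

lemma theta4_eq (v τ : ℂ) : theta4 v τ = jacobiTheta₂ (v - 1 / 2) τ := by
  rw [theta4, jacobiTheta₂]
  refine tsum_congr fun k => ?_
  rw [jacobiTheta₂_term]
  have h : (-1 : ℂ) ^ k = Complex.exp ((k : ℂ) * (-(π * Complex.I))) := by
    rw [Complex.exp_int_mul, Complex.exp_neg, Complex.exp_pi_mul_I]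
    norm_num
  rw [h, ← Complex.exp_add]
  congr 1
  ring

theorem theta2_modular_transformation (τ v : ℂ) (hτ : 0 < τ.im) :
    theta2 (v / τ) (-1 / τ) =
      (τ / Complex.I) ^ ((1 : ℂ) / 2) * Complex.exp (π * Complex.I * v ^ 2 / τ) *
        theta4 v τ := by
  have h0 : τ ≠ 0 := fun h => by simp [h] at hτ
  have hX : ((-Complex.I * τ) ^ (1 / 2 : ℂ)) ≠ 0 := by
    rw [Ne, Complex.cpow_eq_zero_iff]
    simp [Complex.I_ne_zero, h0]
  have hbase : τ / Complex.I = -Complex.I * τ := by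
    rw [Complex.div_I]; ring
  have harg : v / τ + (-1 / τ) / 2 = (v - 1 / 2) / τ := by
    field_simp
    ring
  rw [theta2_eq, theta4_eq, jacobiTheta₂_functional_equation (v - 1 / 2) τ, harg, hbase]
  set J := jacobiTheta₂ ((v - 1 / 2) / τ) (-1 / τ)
  rw [show ((-Complex.I * τ) ^ (1 / 2 : ℂ)) * Complex.exp (π * Complex.I * v ^ 2 / τ) *
      (1 / ((-Complex.I * τ) ^ (1 / 2 : ℂ)) *
        Complex.exp (-π * Complex.I * (v - 1 / 2) ^ 2 / τ) * J) =
      (Complex.exp (π * Complex.I * v ^ 2 / τ) *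
        Complex.exp (-π * Complex.I * (v - 1 / 2) ^ 2 / τ)) * J by
    field_simp]
  rw [← Complex.exp_add]
  congr 2
  field_simp
  ring
end
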